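/- arXiv:2009.09908 — 3 statements merged into one kernel-verified Lean document; each statement's English description precedes it below -/
import Mathlib

section
/- For every fixed z ∈ ℝ^n and every τ > 0, the full-coordinates oracle satisfies E[‖g_f(z,τ,ξ) − F(z)‖_q²] ≤ 3σ² + 3 n L₂² τ² + 12 n Δ²/τ², where the expectation is over ξ. -/
/-!
Write `g_f(z,τ,ξ) − F(z)` as `(F(z,ξ) − F(z)) + (g_f(z,τ,ξ)|_{δ=0} − F(z,ξ)) + g_δ(z,τ)`.
For `q ≥ 2` the `ℓ_q` norm is dominated by the Euclidean one, and
`(a + b + c)² ≤ 3(a² + b² + c²)`. Each coordinate of the middle term is a difference quotient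
minus a partial derivative, hence at most `L(ξ)τ` by the mean value theorem and the Lipschitz
bound on `F(·,ξ)`; each coordinate of `g_δ` is at most `2Δ/τ`. Taking expectations gives
`3σ² + 3nL₂²τ² + 12nΔ²/τ²`.
-/

open MeasureTheory Real Finset
open scoped RealInnerProductSpace

noncomputable section

/-- `ℝ^n` with the Euclidean structure. -/
abbrev Esp (n : ℕ) := EuclideanSpace ℝ (Fin n)

/-- `ℝ^{n_x} × ℝ^{n_y}` with the Euclidean (ℓ₂-product) structure. -/
abbrev Zsp (nx ny : ℕ) := WithLp 2 (Esp nx × Esp ny)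

/-- Pairing `(x, y) ∈ ℝ^{n_x} × ℝ^{n_y} = ℝ^n`. -/
def mkZ {nx ny : ℕ} (x : Esp nx) (y : Esp ny) : Zsp nx ny := (WithLp.equiv 2 _).symm (x, y)

/-- The ℓ_q "norm" `(∑ i, |z_i|^q)^{1/q}` on `ℝ^n = ℝ^{n_x} × ℝ^{n_y}`. -/
def lqN (q : ℝ) {nx ny : ℕ} (z : Zsp nx ny) : ℝ :=
  ((∑ i, |z.fst i| ^ q) + ∑ j, |z.snd j| ^ q) ^ (1 / q)

/-- The saddle-point operator `F(x,y) = (∇_x f(x,y), −∇_y f(x,y))`. -/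
def sadOp {nx ny : ℕ} (f : Zsp nx ny → ℝ) (z : Zsp nx ny) : Zsp nx ny :=
  mkZ (gradient (fun x => f (mkZ x z.snd)) z.fst) (-(gradient (fun y => f (mkZ z.fst y)) z.snd))

/-- The full-coordinates zeroth-order oracle
`g_f(z,τ,ξ) = (1/τ) ∑_{i≤n_x} (f̃(z+τh_i,ξ) − f̃(z,ξ)) h_i
            + (1/τ) ∑_{i>n_x} (f̃(z,ξ) − f̃(z+τh_i,ξ)) h_i`,
written componentwise in `ℝ^{n_x} × ℝ^{n_y}`. -/
def gfOr {nx ny : ℕ} {Ξ : Type*} (ftil : Zsp nx ny → Ξ → ℝ) (z : Zsp nx ny) (τ : ℝ)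
    (ξv : Ξ) : Zsp nx ny :=
  mkZ (WithLp.toLp 2 (fun i => (ftil (mkZ (z.fst + τ • EuclideanSpace.single i 1) z.snd) ξv - ftil z ξv) / τ))
      (WithLp.toLp 2 (fun j => (ftil z ξv - ftil (mkZ z.fst (z.snd + τ • EuclideanSpace.single j 1)) ξv) / τ))

variable {nx ny : ℕ}

lemma Zsp.norm_sq_eq (w : Zsp nx ny) :
    ‖w‖ ^ 2 = ∑ i, w.fst i ^ 2 + ∑ j, w.snd j ^ 2 := by
  simp only [WithLp.prod_norm_sq_eq_of_L2, EuclideanSpace.norm_sq_eq, Real.norm_eq_abs, sq_abs]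

lemma Zsp.abs_fst_le_norm (w : Zsp nx ny) (i : Fin nx) : |w.fst i| ≤ ‖w‖ :=
  (PiLp.norm_apply_le w.fst i).trans (WithLp.norm_fst_le (x := w))

lemma Zsp.abs_snd_le_norm (w : Zsp nx ny) (j : Fin ny) : |w.snd j| ≤ ‖w‖ :=
  (PiLp.norm_apply_le w.snd j).trans (WithLp.norm_snd_le (x := w))

lemma Zsp.norm_sq_le_of_abs_le {w : Zsp nx ny} {C : ℝ}
    (hfst : ∀ i, |w.fst i| ≤ C) (hsnd : ∀ j, |w.snd j| ≤ C) :
    ‖w‖ ^ 2 ≤ (nx + ny : ℝ) * C ^ 2 := by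
  have hsq {a : ℝ} (ha : |a| ≤ C) : a ^ 2 ≤ C ^ 2 := by
    simpa only [sq_abs] using pow_le_pow_left₀ (abs_nonneg a) ha 2
  calc ‖w‖ ^ 2 = ∑ i, w.fst i ^ 2 + ∑ j, w.snd j ^ 2 := w.norm_sq_eq
    _ ≤ ∑ _i : Fin nx, C ^ 2 + ∑ _j : Fin ny, C ^ 2 :=
      add_le_add (sum_le_sum fun i _ => hsq (hfst i)) (sum_le_sum fun j _ => hsq (hsnd j))
    _ = (nx + ny : ℝ) * C ^ 2 := by
      simp only [sum_const, card_univ, Fintype.card_fin, nsmul_eq_mul]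
      ring

lemma abs_rpow_le_rpow_sub_two_mul_sq {q M a : ℝ} (hq : 2 ≤ q) (ha : |a| ≤ M) :
    |a| ^ q ≤ M ^ (q - 2) * a ^ 2 := by
  rcases eq_or_ne a 0 with rfl | h
  · rw [abs_zero, Real.zero_rpow (by linarith)]
    positivity
  · calc |a| ^ q = |a| ^ (q - 2) * |a| ^ (2 : ℝ) := by
          rw [← Real.rpow_add (abs_pos.mpr h), sub_add_cancel]
      _ ≤ M ^ (q - 2) * a ^ 2 := by
          rw [Real.rpow_two, sq_abs]
          gcongr

lemma lqN_le_norm {q : ℝ} (hq : 2 ≤ q) (w : Zsp nx ny) : lqN q w ≤ ‖w‖ := by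
  have hq0 : 0 < q := by linarith
  have hsum : ∑ i, |w.fst i| ^ q + ∑ j, |w.snd j| ^ q ≤ ‖w‖ ^ q :=
    calc ∑ i, |w.fst i| ^ q + ∑ j, |w.snd j| ^ q
        ≤ ∑ i, ‖w‖ ^ (q - 2) * w.fst i ^ 2 + ∑ j, ‖w‖ ^ (q - 2) * w.snd j ^ 2 := by
          gcongr with i _ j _
          · exact abs_rpow_le_rpow_sub_two_mul_sq hq (w.abs_fst_le_norm i)
          · exact abs_rpow_le_rpow_sub_two_mul_sq hq (w.abs_snd_le_norm j)
      _ = ‖w‖ ^ (q - 2) * ‖w‖ ^ (2 : ℝ) := by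
          rw [← mul_sum, ← mul_sum, ← mul_add, Real.rpow_two, w.norm_sq_eq]
      _ = ‖w‖ ^ q := by
          rw [← Real.rpow_add' (norm_nonneg w) (by linarith), sub_add_cancel]
  calc lqN q w ≤ (‖w‖ ^ q) ^ (1 / q) := by unfold lqN; gcongr
    _ = ‖w‖ := by rw [← Real.rpow_mul (norm_nonneg w), mul_one_div_cancel hq0.ne', Real.rpow_one]

lemma lqN_sq_add_add_le {q : ℝ} (hq : 2 ≤ q) (a b c : Zsp nx ny) :
    lqN q (a + b + c) ^ 2 ≤ 3 * ‖a‖ ^ 2 + 3 * ‖b‖ ^ 2 + 3 * ‖c‖ ^ 2 := by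
  have hlqN : lqN q (a + b + c) ≤ ‖a‖ + ‖b‖ + ‖c‖ := (lqN_le_norm hq _).trans norm_add₃_le
  have h0 : 0 ≤ lqN q (a + b + c) := by unfold lqN; positivity
  nlinarith [sq_nonneg (‖a‖ - ‖b‖), sq_nonneg (‖a‖ - ‖c‖), sq_nonneg (‖b‖ - ‖c‖)]

lemma EuclideanSpace.gradient_apply {ι : Type*} [Fintype ι] [DecidableEq ι]
    (g : EuclideanSpace ℝ ι → ℝ) (a : EuclideanSpace ℝ ι) (i : ι) :
    gradient g a i = fderiv ℝ g a (EuclideanSpace.single i 1) := by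
  rw [← toDual_gradient (𝕜 := ℝ), InnerProductSpace.toDual_apply_apply,
    EuclideanSpace.inner_single_right, one_mul, conj_trivial]

lemma sadOp_fst_apply (φ : Zsp nx ny → ℝ) {w : Zsp nx ny} (hφ : DifferentiableAt ℝ φ w)
    (i : Fin nx) : (sadOp φ w).fst i = fderiv ℝ φ w (mkZ (EuclideanSpace.single i 1) 0) := by
  have hmk := (WithLp.prodContinuousLinearEquiv 2 ℝ (Esp nx) (Esp ny)).symm.hasFDerivAt.comp
    w.fst (hasFDerivAt_prodMk_left w.fst w.snd)
  change gradient (fun x => φ (mkZ x w.snd)) w.fst i = _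
  have h : HasFDerivAt (fun x => φ (mkZ x w.snd)) _ w.fst := hφ.hasFDerivAt.comp w.fst hmk
  rw [EuclideanSpace.gradient_apply, h.fderiv]
  rfl

lemma sadOp_snd_apply (φ : Zsp nx ny → ℝ) {w : Zsp nx ny} (hφ : DifferentiableAt ℝ φ w)
    (j : Fin ny) : (sadOp φ w).snd j = -fderiv ℝ φ w (mkZ 0 (EuclideanSpace.single j 1)) := by
  have hmk := (WithLp.prodContinuousLinearEquiv 2 ℝ (Esp nx) (Esp ny)).symm.hasFDerivAt.comp
    w.snd (hasFDerivAt_prodMk_right w.fst w.snd)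
  change -gradient (fun y => φ (mkZ w.fst y)) w.snd j = _
  have h : HasFDerivAt (fun y => φ (mkZ w.fst y)) _ w.snd := hφ.hasFDerivAt.comp w.snd hmk
  rw [EuclideanSpace.gradient_apply, h.fderiv]
  rfl

lemma mkZ_fst_add_smul (z : Zsp nx ny) (c : ℝ) (e : Esp nx) :
    mkZ (z.fst + c • e) z.snd = z + c • mkZ e 0 := by
  rw [WithLp.ext_iff]; ext <;> simp [mkZ]

lemma mkZ_snd_add_smul (z : Zsp nx ny) (c : ℝ) (e : Esp ny) :
    mkZ z.fst (z.snd + c • e) = z + c • mkZ 0 e := by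
  rw [WithLp.ext_iff]; ext <;> simp [mkZ]

lemma norm_mkZ_single_zero (i : Fin nx) :
    ‖mkZ (EuclideanSpace.single i (1 : ℝ)) (0 : Esp ny)‖ = 1 := by
  rw [← pow_eq_one_iff_of_nonneg (norm_nonneg _) two_ne_zero, WithLp.prod_norm_sq_eq_of_L2]
  simp [mkZ]

lemma norm_mkZ_zero_single (j : Fin ny) :
    ‖mkZ (0 : Esp nx) (EuclideanSpace.single j (1 : ℝ))‖ = 1 := by
  rw [← pow_eq_one_iff_of_nonneg (norm_nonneg _) two_ne_zero, WithLp.prod_norm_sq_eq_of_L2]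
  simp [mkZ]

section DifferenceQuotient

variable {E : Type*} [NormedAddCommGroup E] [NormedSpace ℝ E] {φ : E → ℝ}

lemma abs_slope_sub_fderiv_le (hφ : Differentiable ℝ φ) (z u : E) {K τ : ℝ} (hτ : 0 < τ)
    (hK : ∀ t ∈ Set.Icc (0 : ℝ) τ, |fderiv ℝ φ (z + t • u) u - fderiv ℝ φ z u| ≤ K) :
    |(φ (z + τ • u) - φ z) / τ - fderiv ℝ φ z u| ≤ K := by
  set D := fderiv ℝ φ z u
  have hderiv (t : ℝ) : HasDerivAt (fun s : ℝ => φ (z + s • u) - s * D)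
      (fderiv ℝ φ (z + t • u) u - D) t := by
    have hline : HasDerivAt (fun s : ℝ => z + s • u) u t := by
      simpa using ((hasDerivAt_id t).smul_const u).const_add z
    exact ((hφ _).hasFDerivAt.comp_hasDerivAt t hline).sub (hasDerivAt_mul_const D)
  have hmvt := (convex_Icc 0 τ).norm_image_sub_le_of_norm_hasDerivWithin_le
    (fun t _ => (hderiv t).hasDerivWithinAt) (fun t ht => (Real.norm_eq_abs _).trans_le (hK t ht))
    (Set.left_mem_Icc.2 hτ.le) (Set.right_mem_Icc.2 hτ.le)
  simp only [Real.norm_eq_abs, zero_smul, add_zero, zero_mul, sub_zero, abs_of_pos hτ] at hmvt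
  have hslope : (φ (z + τ • u) - φ z) / τ - D = (φ (z + τ • u) - τ * D - φ z) / τ := by
    field_simp
    ring
  rwa [hslope, abs_div, abs_of_pos hτ, div_le_iff₀ hτ]

lemma abs_slope_sub_fderiv_le_of_lipschitz (hφ : Differentiable ℝ φ) (z u : E) {L τ : ℝ}
    (hτ : 0 < τ) (hL : ∀ w w', |fderiv ℝ φ w u - fderiv ℝ φ w' u| ≤ L * ‖w - w'‖) :
    |(φ (z + τ • u) - φ z) / τ - fderiv ℝ φ z u| ≤ L * ‖u‖ * τ := by
  have hLu : 0 ≤ L * ‖u‖ := by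
    simpa using (abs_nonneg _).trans (hL (z + u) z)
  refine abs_slope_sub_fderiv_le hφ z u hτ fun t ht => ?_
  calc |fderiv ℝ φ (z + t • u) u - fderiv ℝ φ z u| ≤ L * ‖z + t • u - z‖ := hL _ _
    _ = L * ‖u‖ * t := by
      rw [add_sub_cancel_left, norm_smul, Real.norm_eq_abs, abs_of_nonneg ht.1]; ring
    _ ≤ L * ‖u‖ * τ := mul_le_mul_of_nonneg_left ht.2 hLu

end DifferenceQuotient

section Oracle

variable {Ξ : Type*}

lemma gfOr_fst_apply (f : Zsp nx ny → Ξ → ℝ) (z : Zsp nx ny) (τ : ℝ) (ξ : Ξ) (i : Fin nx) :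
    (gfOr f z τ ξ).fst i = (f (mkZ (z.fst + τ • EuclideanSpace.single i 1) z.snd) ξ - f z ξ) / τ :=
  rfl

lemma gfOr_snd_apply (f : Zsp nx ny → Ξ → ℝ) (z : Zsp nx ny) (τ : ℝ) (ξ : Ξ) (j : Fin ny) :
    (gfOr f z τ ξ).snd j = (f z ξ - f (mkZ z.fst (z.snd + τ • EuclideanSpace.single j 1)) ξ) / τ :=
  rfl

lemma gfOr_add (f g : Zsp nx ny → Ξ → ℝ) (z : Zsp nx ny) (τ : ℝ) (ξ : Ξ) :
    gfOr (fun z' ξ' => f z' ξ' + g z' ξ') z τ ξ = gfOr f z τ ξ + gfOr g z τ ξ := by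
  set h : Zsp nx ny → Ξ → ℝ := fun z' ξ' => f z' ξ' + g z' ξ'
  rw [WithLp.ext_iff]
  ext i
  · change (gfOr h z τ ξ).fst i = (gfOr f z τ ξ).fst i + (gfOr g z τ ξ).fst i
    simp only [gfOr_fst_apply, h]
    ring
  · change (gfOr h z τ ξ).snd i = (gfOr f z τ ξ).snd i + (gfOr g z τ ξ).snd i
    simp only [gfOr_snd_apply, h]
    ring

lemma norm_sq_gfOr_le_of_abs_le {f : Zsp nx ny → Ξ → ℝ} {ξ : Ξ} {Δ : ℝ}
    (hf : ∀ z', |f z' ξ| ≤ Δ) (z : Zsp nx ny) {τ : ℝ} (hτ : 0 < τ) :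
    ‖gfOr f z τ ξ‖ ^ 2 ≤ (nx + ny : ℝ) * (2 * Δ / τ) ^ 2 := by
  have habs (a b : Zsp nx ny) : |(f a ξ - f b ξ) / τ| ≤ 2 * Δ / τ := by
    rw [abs_div, abs_of_pos hτ, two_mul]
    gcongr
    exact (abs_sub _ _).trans (add_le_add (hf a) (hf b))
  exact Zsp.norm_sq_le_of_abs_le (fun i => habs _ _) (fun j => habs _ _)

lemma norm_sq_gfOr_sub_sadOp_le {f : Zsp nx ny → Ξ → ℝ} {ξ : Ξ} {L : ℝ}
    (hf : Differentiable ℝ (f · ξ))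
    (hLip : ∀ z1 z2, ‖sadOp (f · ξ) z1 - sadOp (f · ξ) z2‖ ≤ L * ‖z1 - z2‖)
    (z : Zsp nx ny) {τ : ℝ} (hτ : 0 < τ) :
    ‖gfOr f z τ ξ - sadOp (f · ξ) z‖ ^ 2 ≤ (nx + ny : ℝ) * (L * τ) ^ 2 := by
  refine Zsp.norm_sq_le_of_abs_le (fun i => ?_) (fun j => ?_)
  · have hslope := abs_slope_sub_fderiv_le_of_lipschitz hf z _ hτ fun w w' => by
      rw [← sadOp_fst_apply _ (hf w), ← sadOp_fst_apply _ (hf w')]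
      exact (Zsp.abs_fst_le_norm (sadOp _ w - sadOp _ w') i).trans (hLip w w')
    rw [norm_mkZ_single_zero, mul_one, ← mkZ_fst_add_smul] at hslope
    convert hslope using 2
    rw [WithLp.sub_fst, PiLp.sub_apply, gfOr_fst_apply, sadOp_fst_apply _ (hf z)]
  · have hslope := abs_slope_sub_fderiv_le_of_lipschitz hf z _ hτ fun w w' => by
      rw [← abs_neg, neg_sub', ← sadOp_snd_apply _ (hf w), ← sadOp_snd_apply _ (hf w')]
      exact (Zsp.abs_snd_le_norm (sadOp _ w - sadOp _ w') j).trans (hLip w w')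
    rw [norm_mkZ_zero_single, mul_one, ← mkZ_snd_add_smul, ← abs_neg] at hslope
    convert hslope using 2
    rw [WithLp.sub_snd, PiLp.sub_apply, gfOr_snd_apply, sadOp_snd_apply _ (hf z)]
    ring

lemma lqN_sq_gfOr_add_sub_le {f : Zsp nx ny → Ξ → ℝ} {ξ : Ξ} {δ : Zsp nx ny → ℝ}
    {q L Δ τ : ℝ} (hq : 2 ≤ q) (hf : Differentiable ℝ (f · ξ))
    (hLip : ∀ z1 z2, ‖sadOp (f · ξ) z1 - sadOp (f · ξ) z2‖ ≤ L * ‖z1 - z2‖)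
    (hδ : ∀ z, |δ z| ≤ Δ) (z F : Zsp nx ny) (hτ : 0 < τ) :
    lqN q (gfOr (fun z' ξ' => f z' ξ' + δ z') z τ ξ - F) ^ 2 ≤
      3 * ‖sadOp (f · ξ) z - F‖ ^ 2 + 3 * (nx + ny : ℝ) * L ^ 2 * τ ^ 2 +
        12 * (nx + ny : ℝ) * Δ ^ 2 / τ ^ 2 := by
  have hsplit : gfOr (fun z' ξ' => f z' ξ' + δ z') z τ ξ - F =
      (sadOp (f · ξ) z - F) + (gfOr f z τ ξ - sadOp (f · ξ) z) + gfOr (fun z' _ => δ z') z τ ξ := by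
    rw [gfOr_add]
    abel
  have hbias := norm_sq_gfOr_sub_sadOp_le hf hLip z hτ
  have hnoise := norm_sq_gfOr_le_of_abs_le (f := fun z' (_ : Ξ) => δ z') (ξ := ξ) hδ z hτ
  rw [hsplit]
  refine (lqN_sq_add_add_le hq _ _ _).trans ?_
  calc _ ≤ 3 * ‖sadOp (f · ξ) z - F‖ ^ 2 + 3 * ((nx + ny : ℝ) * (L * τ) ^ 2) +
        3 * ((nx + ny : ℝ) * (2 * Δ / τ) ^ 2) := by gcongr
    _ = _ := by ring

end Oracle

theorem full_coordinates_second_moment_general {nx ny : ℕ}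
    (q : ℝ) (hq : 2 ≤ q)
    {Ω : Type*} [MeasurableSpace Ω] (μ : Measure Ω) [IsProbabilityMeasure μ]
    (fsto : Zsp nx ny → Ω → ℝ) (hfsto : ∀ ω, Differentiable ℝ (fun z => fsto z ω))
    (fdet : Zsp nx ny → ℝ)
    (σ Δ L₂ : ℝ) (δ : Zsp nx ny → ℝ) (hδ : ∀ z, |δ z| ≤ Δ)
    (hvarInt : ∀ z, Integrable (fun ω => ‖sadOp (fun z' => fsto z' ω) z - sadOp fdet z‖ ^ 2) μ)
    (hvar : ∀ z, ∫ ω, ‖sadOp (fun z' => fsto z' ω) z - sadOp fdet z‖ ^ 2 ∂μ ≤ σ ^ 2)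
    (Lξ : Ω → ℝ)
    (hLip : ∀ ω z1 z2, ‖sadOp (fun z' => fsto z' ω) z1 - sadOp (fun z' => fsto z' ω) z2‖ ≤
      Lξ ω * ‖z1 - z2‖)
    (hL2Int : Integrable (fun ω => Lξ ω ^ 2) μ)
    (hL2 : ∫ ω, Lξ ω ^ 2 ∂μ ≤ L₂ ^ 2)
    (z : Zsp nx ny) (τ : ℝ) (hτ : 0 < τ)
    (hmomInt : Integrable
      (fun ω => lqN q (gfOr (fun z' ω' => fsto z' ω' + δ z') z τ ω - sadOp fdet z) ^ 2) μ) :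
    ∫ ω, lqN q (gfOr (fun z' ω' => fsto z' ω' + δ z') z τ ω - sadOp fdet z) ^ 2 ∂μ ≤
      3 * σ ^ 2 + 3 * (nx + ny : ℝ) * L₂ ^ 2 * τ ^ 2 +
        12 * (nx + ny : ℝ) * Δ ^ 2 / τ ^ 2 := by
  set V := fun ω => ‖sadOp (fun z' => fsto z' ω) z - sadOp fdet z‖ ^ 2
  set c : ℝ := 3 * (nx + ny : ℝ) * τ ^ 2
  set C : ℝ := 12 * (nx + ny : ℝ) * Δ ^ 2 / τ ^ 2
  have hint : Integrable (fun ω => 3 * V ω + c * Lξ ω ^ 2) μ :=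
    ((hvarInt z).const_mul 3).add (hL2Int.const_mul c)
  calc ∫ ω, lqN q (gfOr (fun z' ω' => fsto z' ω' + δ z') z τ ω - sadOp fdet z) ^ 2 ∂μ
      ≤ ∫ ω, (3 * V ω + c * Lξ ω ^ 2 + C) ∂μ :=
        integral_mono hmomInt (hint.add (integrable_const C)) fun ω =>
          (lqN_sq_gfOr_add_sub_le hq (hfsto ω) (hLip ω) hδ z _ hτ).trans_eq (by ring)
    _ = 3 * ∫ ω, V ω ∂μ + c * ∫ ω, Lξ ω ^ 2 ∂μ + C := by
        rw [integral_add hint (integrable_const C), integral_add ((hvarInt z).const_mul 3)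
          (hL2Int.const_mul c), integral_const_mul, integral_const_mul, integral_const,
          probReal_univ, one_smul]
    _ ≤ 3 * σ ^ 2 + c * L₂ ^ 2 + C := by gcongr; exact hvar z
    _ = _ := by ring

/-- Second-moment bound for the full-coordinates oracle:
`E[‖g_f(z,τ,ξ) − F(z)‖_q²] ≤ 3σ² + 3 n L₂² τ² + 12 n Δ²/τ²`. -/
theorem full_coordinates_second_moment {nx ny : ℕ} (hnx : 1 ≤ nx) (hny : 1 ≤ ny)
    (q : ℝ) (hq : 2 ≤ q)
    {Ω : Type*} [MeasurableSpace Ω] (μ : Measure Ω) [IsProbabilityMeasure μ]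
    (fsto : Zsp nx ny → Ω → ℝ) (hfsto : ∀ ω, Differentiable ℝ (fun z => fsto z ω))
    (fdet : Zsp nx ny → ℝ) (hfdet : Differentiable ℝ fdet)
    (σ Δ L₂ : ℝ) (δ : Zsp nx ny → ℝ) (hδ : ∀ z, |δ z| ≤ Δ)
    (hunb : ∀ z, ∫ ω, (sadOp (fun z' => fsto z' ω) z) ∂μ = sadOp fdet z)
    (hvarInt : ∀ z, Integrable (fun ω => ‖sadOp (fun z' => fsto z' ω) z - sadOp fdet z‖ ^ 2) μ)
    (hvar : ∀ z, ∫ ω, ‖sadOp (fun z' => fsto z' ω) z - sadOp fdet z‖ ^ 2 ∂μ ≤ σ ^ 2)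
    (Lξ : Ω → ℝ)
    (hLip : ∀ ω z1 z2, ‖sadOp (fun z' => fsto z' ω) z1 - sadOp (fun z' => fsto z' ω) z2‖ ≤
      Lξ ω * ‖z1 - z2‖)
    (hL2Int : Integrable (fun ω => Lξ ω ^ 2) μ)
    (hL2 : ∫ ω, Lξ ω ^ 2 ∂μ ≤ L₂ ^ 2)
    (z : Zsp nx ny) (τ : ℝ) (hτ : 0 < τ)
    (hmomInt : Integrable
      (fun ω => lqN q (gfOr (fun z' ω' => fsto z' ω' + δ z') z τ ω - sadOp fdet z) ^ 2) μ) :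
    ∫ ω, lqN q (gfOr (fun z' ω' => fsto z' ω' + δ z') z τ ω - sadOp fdet z) ^ 2 ∂μ ≤
      3 * σ ^ 2 + 3 * (nx + ny : ℝ) * L₂ ^ 2 * τ ^ 2 +
        12 * (nx + ny : ℝ) * Δ ^ 2 / τ ^ 2 :=
  full_coordinates_second_moment_general q hq μ fsto hfsto fdet σ Δ L₂ δ hδ hvarInt hvar Lξ hLip
    hL2Int hL2 z τ hτ hmomInt
end
end

section
/- Let z ∈ Z, g ∈ ℝ^n, and z_1 = prox_z(g). Then for all u ∈ Z: ⟨g, z − u⟩ ≤ V(z, u) − V(z_1, u) + (1/2)‖g‖_q². -/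
open MeasureTheory Real
open scoped RealInnerProductSpace

noncomputable section

/-- The ℓ_r "norm" `(∑ i, |x i|^r)^(1/r)` on `ℝ^n`, for a real exponent `r`. -/
def lrNorm {n : ℕ} (r : ℝ) (x : EuclideanSpace ℝ (Fin n)) : ℝ := (∑ i, |x i| ^ r) ^ (1 / r)

/-! The first-order optimality condition of the prox step,
`⟪∇d(z₁) - ∇d(z) + g, u - z₁⟫ ≥ 0`, together with the three-point identity
`V(z,u) - V(z₁,u) - V(z,z₁) = ⟪∇d(z₁) - ∇d(z), u - z₁⟫` gives
`⟪g, z₁ - u⟫ ≤ V(z,u) - V(z₁,u) - V(z,z₁)`. The remaining term `⟪g, z - z₁⟫` is at most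
`½‖g‖_q² + ½‖z₁ - z‖_p²` by Hölder and Young, and strong convexity gives
`V(z,z₁) ≥ ½‖z₁ - z‖_p²`. -/

open Set InnerProductSpace

section Bregman

variable {E : Type*} [NormedAddCommGroup E] [InnerProductSpace ℝ E]

def bregmanDiv (d : E → ℝ) (d' : E → E) (z w : E) : ℝ := d w - d z - ⟪d' z, w - z⟫

theorem bregmanDiv_three_point (d : E → ℝ) (d' : E → E) (z z₁ u : E) :
    bregmanDiv d d' z u - bregmanDiv d d' z₁ u - bregmanDiv d d' z z₁ = ⟪d' z₁ - d' z, u - z₁⟫ := by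
  simp only [bregmanDiv, inner_sub_left, inner_sub_right]
  ring

theorem inner_gradient_le_of_strongConvex [CompleteSpace E] {d : E → ℝ} {D x w : E} {c : ℝ}
    (hd : HasGradientAt d D x)
    (hsc : ∀ t ∈ Icc (0 : ℝ) 1,
      d (t • w + (1 - t) • x) ≤ t * d w + (1 - t) * d x - t * (1 - t) / 2 * c) :
    ⟪D, w - x⟫ ≤ d w - d x - c / 2 := by
  -- Strong convexity says exactly that `φ ≤ φ 0` on `[0, 1]`, so `φ'(0) ≤ 0`.
  set φ : ℝ → ℝ := fun t ↦ d (x + t • (w - x)) - t * (d w - d x - (1 - t) / 2 * c)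
  have hmax : IsMaxOn φ (Icc 0 1) 0 := fun t ht ↦ by
    have := hsc t ht
    simp only [mem_ofPred_eq, φ, zero_smul, add_zero, zero_mul, sub_zero]
    rw [show x + t • (w - x) = t • w + (1 - t) • x by module]
    linarith
  have hline : HasDerivAt (fun t : ℝ ↦ d (x + t • (w - x))) ⟪D, w - x⟫ 0 := by
    simpa [HasLineDerivAt] using hd.hasFDerivAt.hasLineDerivAt (w - x)
  have hpoly : HasDerivAt (fun t : ℝ ↦ t * (d w - d x - (1 - t) / 2 * c)) (d w - d x - c / 2) 0 := by
    have := ((hasDerivAt_id (0 : ℝ)).mul_const (d w - d x - c / 2)).add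
      (((hasDerivAt_id (0 : ℝ)).pow 2).mul_const (c / 2))
    refine (this.congr_deriv (by simp)).congr_of_eventuallyEq (.of_forall fun t ↦ ?_)
    simp only [id, Pi.add_apply, Pi.pow_apply]
    ring
  have hφ : HasDerivAt φ (⟪D, w - x⟫ - (d w - d x - c / 2)) 0 := hline.sub hpoly
  have hone : (1 : ℝ) ∈ posTangentConeAt (Icc 0 1) 0 :=
    mem_posTangentConeAt_of_segment_subset (by simp [segment_eq_Icc])
  have := hmax.localize.hasFDerivWithinAt_nonpos hφ.hasFDerivAt.hasFDerivWithinAt hone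
  simp only [ContinuousLinearMap.toSpanSingleton_apply, smul_eq_mul, one_mul] at this
  linarith

theorem IsMinOn.bregmanDiv_prox_optimality [CompleteSpace E] {s : Set E} {d : E → ℝ}
    {d' : E → E} {z g x u : E} (hmin : IsMinOn (fun w ↦ bregmanDiv d d' z w + ⟪g, w⟫) s x)
    (hs : Convex ℝ s) (hd : HasGradientAt d (d' x) x) (hx : x ∈ s) (hu : u ∈ s) :
    0 ≤ ⟪d' x - d' z + g, u - x⟫ := by
  have hf : HasFDerivAt (fun w ↦ bregmanDiv d d' z w + ⟪g, w⟫)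
      (toDual ℝ E (d' x) + innerSL ℝ (g - d' z)) x := by
    have := hd.hasFDerivAt.add ((innerSL ℝ (g - d' z)).hasFDerivAt (x := x))
    refine (this.add_const (⟪d' z, z⟫ - d z)).congr_of_eventuallyEq (.of_forall fun w ↦ ?_)
    simp only [bregmanDiv, Pi.add_apply, innerSL_apply_apply, inner_sub_left, inner_sub_right]
    ring
  have := hmin.localize.hasFDerivWithinAt_nonneg hf.hasFDerivWithinAt
    (sub_mem_posTangentConeAt_of_segment_subset (hs.segment_subset hx hu))
  simp only [add_apply, toDual_apply_apply, innerSL_apply_apply, ← inner_add_left] at this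
  convert this using 2
  abel

end Bregman

section LrNorm

variable {n : ℕ}

theorem lrNorm_sub_comm (r : ℝ) (x y : EuclideanSpace ℝ (Fin n)) :
    lrNorm r (x - y) = lrNorm r (y - x) := by
  simp only [lrNorm, PiLp.sub_apply, abs_sub_comm]

theorem inner_le_lrNorm_mul_lrNorm {p q : ℝ} (hpq : p.HolderConjugate q)
    (x y : EuclideanSpace ℝ (Fin n)) : ⟪x, y⟫ ≤ lrNorm p x * lrNorm q y := by
  simpa [lrNorm, PiLp.inner_apply, mul_comm] using
    inner_le_Lp_mul_Lq Finset.univ (fun i ↦ x i) (fun i ↦ y i) hpq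

end LrNorm

theorem prox_descent_lemma_general {n : ℕ} (Z : Set (EuclideanSpace ℝ (Fin n)))
    (hZconvex : Convex ℝ Z)
    (p q : ℝ) (hq : 2 ≤ q) (hpq : 1 / p + 1 / q = 1)
    (d : EuclideanSpace ℝ (Fin n) → ℝ) (d' : EuclideanSpace ℝ (Fin n) → EuclideanSpace ℝ (Fin n))
    (hd : ∀ x, HasGradientAt d (d' x) x)
    (hdsc : ∀ z1 ∈ Z, ∀ z2 ∈ Z, ∀ t : ℝ, t ∈ Set.Icc (0 : ℝ) 1 →
      d (t • z1 + (1 - t) • z2) ≤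
        t * d z1 + (1 - t) * d z2 - t * (1 - t) / 2 * lrNorm p (z1 - z2) ^ 2)
    (V : EuclideanSpace ℝ (Fin n) → EuclideanSpace ℝ (Fin n) → ℝ)
    (hV : ∀ z w, V z w = d w - d z - ⟪d' z, w - z⟫)
    (z : EuclideanSpace ℝ (Fin n)) (hz : z ∈ Z) (g : EuclideanSpace ℝ (Fin n))
    (z1 : EuclideanSpace ℝ (Fin n)) (hz1Z : z1 ∈ Z)
    (hz1 : ∀ u ∈ Z, V z z1 + ⟪g, z1⟫ ≤ V z u + ⟪g, u⟫) :
    ∀ u ∈ Z, ⟪g, z - u⟫ ≤ V z u - V z1 u + 1 / 2 * lrNorm q g ^ 2 := by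
  obtain rfl : V = bregmanDiv d d' := funext₂ hV
  intro u hu
  have hconj : q.HolderConjugate p :=
    Real.holderConjugate_iff.mpr ⟨by linarith, by simpa [add_comm] using hpq⟩
  have hopt := (isMinOn_iff.mpr hz1).bregmanDiv_prox_optimality hZconvex (hd z1) hz1Z hu
  have hstrong : lrNorm p (z1 - z) ^ 2 / 2 ≤ bregmanDiv d d' z z1 := by
    have := inner_gradient_le_of_strongConvex (hd z) (hdsc z1 hz1Z z hz)
    rw [bregmanDiv]
    linarith
  have hholder : ⟪g, z - z1⟫ ≤ lrNorm q g * lrNorm p (z1 - z) :=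
    lrNorm_sub_comm p z z1 ▸ inner_le_lrNorm_mul_lrNorm hconj g (z - z1)
  have hyoung := two_mul_le_add_sq (lrNorm q g) (lrNorm p (z1 - z))
  have hsplit : ⟪g, z - u⟫ = ⟪g, z - z1⟫ - ⟪g, u - z1⟫ := by
    rw [← inner_sub_right, sub_sub_sub_cancel_right]
  rw [inner_add_left] at hopt
  linarith [bregmanDiv_three_point d d' z z1 u]

/-- Let `Z ⊆ ℝ^n` be closed convex, `p ∈ [1,2]`, `q ∈ [2,∞)` with
`1/p + 1/q = 1`.  Let `d : ℝ^n → ℝ` be differentiable and 1-strongly convex w.r.t. `‖·‖_p`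
on `Z`, with Bregman divergence `V(z,w) = d(w) − d(z) − ⟨∇d(z), w − z⟩`, and for `z ∈ Z`,
`g ∈ ℝ^n` let `z₁ = prox_z(g)` be a minimizer over `u ∈ Z` of `V(z,u) + ⟨g,u⟩`.
Then for all `u ∈ Z`: `⟨g, z − u⟩ ≤ V(z,u) − V(z₁,u) + (1/2)‖g‖_q²`. -/
theorem prox_descent_lemma {n : ℕ} (hn : 1 ≤ n) (Z : Set (EuclideanSpace ℝ (Fin n)))
    (hZclosed : IsClosed Z) (hZconvex : Convex ℝ Z)
    (p q : ℝ) (hp : 1 ≤ p) (hp2 : p ≤ 2) (hq : 2 ≤ q) (hpq : 1 / p + 1 / q = 1)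
    (d : EuclideanSpace ℝ (Fin n) → ℝ) (d' : EuclideanSpace ℝ (Fin n) → EuclideanSpace ℝ (Fin n))
    (hd : ∀ x, HasGradientAt d (d' x) x)
    (hdsc : ∀ z1 ∈ Z, ∀ z2 ∈ Z, ∀ t : ℝ, t ∈ Set.Icc (0 : ℝ) 1 →
      d (t • z1 + (1 - t) • z2) ≤
        t * d z1 + (1 - t) * d z2 - t * (1 - t) / 2 * lrNorm p (z1 - z2) ^ 2)
    (V : EuclideanSpace ℝ (Fin n) → EuclideanSpace ℝ (Fin n) → ℝ)
    (hV : ∀ z w, V z w = d w - d z - ⟪d' z, w - z⟫)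
    (z : EuclideanSpace ℝ (Fin n)) (hz : z ∈ Z) (g : EuclideanSpace ℝ (Fin n))
    (z1 : EuclideanSpace ℝ (Fin n)) (hz1Z : z1 ∈ Z)
    (hz1 : ∀ u ∈ Z, V z z1 + ⟪g, z1⟫ ≤ V z u + ⟪g, u⟫) :
    ∀ u ∈ Z, ⟪g, z - u⟫ ≤ V z u - V z1 u + 1 / 2 * lrNorm q g ^ 2 :=
  prox_descent_lemma_general Z hZconvex p q hq hpq d d' hd hdsc V hV z hz g z1 hz1Z hz1
end
end

section
/- Let f : ℝ^{n_x} × ℝ^{n_y} → ℝ be differentiable and convex–concave on Z = X × Y (f(·,y) convex on X for each y ∈ Y and f(x,·) concave on Y for each x ∈ X), with X, Y compact convex, and let F(x,y) = (∇_x f(x,y), −∇_y f(x,y)). For any points w_0, …, w_N ∈ Z, the average z̄ = (x̄, ȳ) = (1/(N+1)) Σ_{k=0}^{N} w_k satisfies ε_sad(z̄) ≤ max_{u ∈ Z} (1/(N+1)) Σ_{k=0}^{N} ⟨F(w_k), w_k − u⟩, where ε_sad(x̄,ȳ) = max_{y'∈Y} f(x̄,y') − min_{x'∈X} f(x',ȳ).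 -/
open MeasureTheory Real Finset
open scoped RealInnerProductSpace

noncomputable section

/-- The saddle-point gap `ε_sad(x̄,ȳ) = max_{y'∈Y} f(x̄,y') − min_{x'∈X} f(x',ȳ)`. -/
def epsSad {nx ny : ℕ} (f : Zsp nx ny → ℝ) (X : Set (Esp nx)) (Y : Set (Esp ny))
    (z : Zsp nx ny) : ℝ :=
  sSup ((fun y' => f (mkZ z.fst y')) '' Y) - sInf ((fun x' => f (mkZ x' z.snd)) '' X)

/-! By Jensen's inequality in each variable, for `u = (x', y') ∈ Z` the gap
`f(x̄, y') - f(x', ȳ)` is at most the average of `f(x_k, y') - f(x', y_k)`. The first-order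
conditions for the convex `f(·, y_k)` and the concave `f(x_k, ·)` bound each of these terms by
`⟨F(w_k), w_k - u⟩`, and the supremum over the compact set `Z` of the averaged right-hand side
is finite, so it dominates every such gap. -/

theorem ConvexOn.le_sub_of_hasFDerivAt {E : Type*} [NormedAddCommGroup E] [NormedSpace ℝ E]
    {s : Set E} {g : E → ℝ} {g' : E →L[ℝ] ℝ} {a b : E} (hc : ConvexOn ℝ s g)
    (hg : HasFDerivAt g g' a) (ha : a ∈ s) (hb : b ∈ s) : g' (b - a) ≤ g b - g a := by
  have hline : ConvexOn ℝ (Set.Icc 0 1) (fun t : ℝ => g (AffineMap.lineMap (k := ℝ) a b t)) :=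
    (hc.comp_affineMap _).subset (fun t ht => hc.1.lineMap_mem ha hb ht) (convex_Icc 0 1)
  have hderiv : HasDerivAt (fun t : ℝ => g (AffineMap.lineMap (k := ℝ) a b t)) (g' (b - a)) 0 := by
    have hlineMap : HasDerivAt (fun t : ℝ => AffineMap.lineMap (k := ℝ) a b t) (b - a) (0 : ℝ) :=
      AffineMap.hasDerivAt_lineMap
    exact hg.comp_hasDerivAt_of_eq 0 hlineMap (by simp)
  simpa [slope_def_field] using
    hline.le_slope_of_hasDerivAt (by simp) (by simp) zero_lt_one hderiv

theorem ConvexOn.inner_gradient_le_sub {E : Type*} [NormedAddCommGroup E]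
    [InnerProductSpace ℝ E] [CompleteSpace E] {s : Set E} {g : E → ℝ} {a b : E}
    (hc : ConvexOn ℝ s g) (hg : DifferentiableAt ℝ g a) (ha : a ∈ s) (hb : b ∈ s) :
    ⟪gradient g a, b - a⟫ ≤ g b - g a := by
  simpa using hc.le_sub_of_hasFDerivAt hg.hasGradientAt.hasFDerivAt ha hb

theorem ConcaveOn.sub_le_inner_gradient {E : Type*} [NormedAddCommGroup E]
    [InnerProductSpace ℝ E] [CompleteSpace E] {s : Set E} {g : E → ℝ} {a b : E}
    (hc : ConcaveOn ℝ s g) (hg : DifferentiableAt ℝ g a) (ha : a ∈ s) (hb : b ∈ s) :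
    g b - g a ≤ ⟪gradient g a, b - a⟫ := by
  have := hc.neg.le_sub_of_hasFDerivAt hg.hasGradientAt.hasFDerivAt.neg ha hb
  simp only [neg_apply, InnerProductSpace.toDual_apply_apply, Pi.neg_apply] at this
  linarith

theorem WithLp.fst_sum {p : ENNReal} {α β ι : Type*} [AddCommGroup α] [AddCommGroup β]
    (s : Finset ι) (w : ι → WithLp p (α × β)) : (∑ k ∈ s, w k).fst = ∑ k ∈ s, (w k).fst :=
  map_sum (WithLp.fstₗ p ℤ α β) w s

theorem WithLp.snd_sum {p : ENNReal} {α β ι : Type*} [AddCommGroup α] [AddCommGroup β]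
    (s : Finset ι) (w : ι → WithLp p (α × β)) : (∑ k ∈ s, w k).snd = ∑ k ∈ s, (w k).snd :=
  map_sum (WithLp.sndₗ p ℤ α β) w s

theorem isCompact_setOf_fst_mem_and_snd_mem {p : ENNReal} {α β : Type*} [TopologicalSpace α]
    [TopologicalSpace β] {X : Set α} {Y : Set β} (hX : IsCompact X) (hY : IsCompact Y) :
    IsCompact {z : WithLp p (α × β) | z.fst ∈ X ∧ z.snd ∈ Y} :=
  (WithLp.homeomorphProd p α β).isCompact_preimage.mpr (hX.prod hY)

theorem sub_le_sum_mul_sub_of_convex_concave {ι E F : Type*} [AddCommGroup E] [Module ℝ E]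
    [AddCommGroup F] [Module ℝ F] {X : Set E} {Y : Set F} {φ : E → F → ℝ}
    (hconv : ∀ y ∈ Y, ConvexOn ℝ X (fun x => φ x y)) (hconc : ∀ x ∈ X, ConcaveOn ℝ Y (φ x))
    {t : Finset ι} {c : ι → ℝ} (h₀ : ∀ k ∈ t, 0 ≤ c k) (h₁ : ∑ k ∈ t, c k = 1)
    {x : ι → E} {y : ι → F} (hx : ∀ k ∈ t, x k ∈ X) (hy : ∀ k ∈ t, y k ∈ Y)
    {x' : E} {y' : F} (hx' : x' ∈ X) (hy' : y' ∈ Y) :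
    φ (∑ k ∈ t, c k • x k) y' - φ x' (∑ k ∈ t, c k • y k) ≤
      ∑ k ∈ t, c k * (φ (x k) y' - φ x' (y k)) := by
  have hleft := (hconv y' hy').map_sum_le h₀ h₁ hx
  have hright := (hconc x' hx').le_map_sum h₀ h₁ hy
  simp only [smul_eq_mul] at hleft hright
  simp only [mul_sub, sum_sub_distrib]
  linarith

section Saddle

variable {nx ny : ℕ}

theorem differentiable_mkZ_left (y : Esp ny) : Differentiable ℝ (fun x : Esp nx => mkZ x y) :=
  (WithLp.prodContinuousLinearEquiv 2 ℝ (Esp nx) (Esp ny)).symm.differentiable.comp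
    (differentiable_id.prodMk (differentiable_const y))

theorem differentiable_mkZ_right (x : Esp nx) : Differentiable ℝ (fun y : Esp ny => mkZ x y) :=
  (WithLp.prodContinuousLinearEquiv 2 ℝ (Esp nx) (Esp ny)).symm.differentiable.comp
    ((differentiable_const x).prodMk differentiable_id)

theorem sub_le_inner_sadOp {X : Set (Esp nx)} {Y : Set (Esp ny)} {f : Zsp nx ny → ℝ}
    (hf : Differentiable ℝ f) (hconv : ∀ y ∈ Y, ConvexOn ℝ X (fun x => f (mkZ x y)))
    (hconc : ∀ x ∈ X, ConcaveOn ℝ Y (fun y => f (mkZ x y))) {z : Zsp nx ny}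
    (hzX : z.fst ∈ X) (hzY : z.snd ∈ Y) {x' : Esp nx} {y' : Esp ny} (hx' : x' ∈ X)
    (hy' : y' ∈ Y) : f (mkZ z.fst y') - f (mkZ x' z.snd) ≤ ⟪sadOp f z, z - mkZ x' y'⟫ := by
  have hx := (hconv _ hzY).inner_gradient_le_sub
    (hf.comp (differentiable_mkZ_left z.snd) z.fst) hzX hx'
  have hy := (hconc _ hzX).sub_le_inner_gradient
    (hf.comp (differentiable_mkZ_right z.fst) z.snd) hzY hy'
  have hsplit : ⟪sadOp f z, z - mkZ x' y'⟫ =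
      ⟪gradient (fun x => f (mkZ x z.snd)) z.fst, z.fst - x'⟫ +
        ⟪-gradient (fun y => f (mkZ z.fst y)) z.snd, z.snd - y'⟫ := rfl
  rw [hsplit]
  simp only [inner_neg_left, inner_sub_right] at hx hy ⊢
  linarith

theorem epsSad_le {X : Set (Esp nx)} {Y : Set (Esp ny)} {f : Zsp nx ny → ℝ} {z : Zsp nx ny}
    {C : ℝ} (hX : X.Nonempty) (hY : Y.Nonempty)
    (h : ∀ x' ∈ X, ∀ y' ∈ Y, f (mkZ z.fst y') - f (mkZ x' z.snd) ≤ C) : epsSad f X Y z ≤ C := by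
  rw [epsSad, sub_le_iff_le_add]
  refine csSup_le (hY.image _) ?_
  rintro _ ⟨y', hy', rfl⟩
  rw [← sub_le_iff_le_add']
  refine le_csInf (hX.image _) ?_
  rintro _ ⟨x', hx', rfl⟩
  linarith [h x' hx' y' hy']

end Saddle

theorem epsSad_le_sup_avg_inner_general {nx ny : ℕ}
    (X : Set (Esp nx)) (Y : Set (Esp ny))
    (hXne : X.Nonempty) (hYne : Y.Nonempty)
    (hXcp : IsCompact X) (hYcp : IsCompact Y)
    (f : Zsp nx ny → ℝ) (hf : Differentiable ℝ f)
    (hconv : ∀ y ∈ Y, ConvexOn ℝ X (fun x => f (mkZ x y)))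
    (hconc : ∀ x ∈ X, ConcaveOn ℝ Y (fun y => f (mkZ x y)))
    (N : ℕ) (w : ℕ → Zsp nx ny)
    (hw : ∀ k ≤ N, (w k).fst ∈ X ∧ (w k).snd ∈ Y) :
    epsSad f X Y ((N + 1 : ℝ)⁻¹ • ∑ k ∈ range (N + 1), w k) ≤
      sSup ((fun u => (N + 1 : ℝ)⁻¹ * ∑ k ∈ range (N + 1), ⟪sadOp f (w k), w k - u⟫) ''
        {z : Zsp nx ny | z.fst ∈ X ∧ z.snd ∈ Y}) := by
  set c : ℝ := (N + 1 : ℝ)⁻¹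
  have hc₀ : ∀ k ∈ range (N + 1), 0 ≤ c := fun _ _ => by positivity
  have hc₁ : ∑ _k ∈ range (N + 1), c = 1 := by
    simp only [c, sum_const, card_range, nsmul_eq_mul]
    push_cast
    field_simp
  have hwZ : ∀ k ∈ range (N + 1), (w k).fst ∈ X ∧ (w k).snd ∈ Y :=
    fun k hk => hw k (Nat.lt_succ_iff.mp (mem_range.mp hk))
  have hbdd := (isCompact_setOf_fst_mem_and_snd_mem (p := 2) hXcp hYcp).bddAbove_image
    (f := fun u => c * ∑ k ∈ range (N + 1), ⟪sadOp f (w k), w k - u⟫) (by fun_prop)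
  refine epsSad_le hXne hYne fun x' hx' y' hy' => ?_
  rw [WithLp.smul_fst, WithLp.smul_snd, WithLp.fst_sum, WithLp.snd_sum, smul_sum, smul_sum]
  calc _ ≤ ∑ k ∈ range (N + 1), c * (f (mkZ (w k).fst y') - f (mkZ x' (w k).snd)) :=
        sub_le_sum_mul_sub_of_convex_concave (φ := fun x y => f (mkZ x y)) hconv hconc hc₀ hc₁
          (fun k hk => (hwZ k hk).1) (fun k hk => (hwZ k hk).2) hx' hy'
    _ ≤ ∑ k ∈ range (N + 1), c * ⟪sadOp f (w k), w k - mkZ x' y'⟫ := by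
        gcongr with k hk
        exact sub_le_inner_sadOp hf hconv hconc (hwZ k hk).1 (hwZ k hk).2 hx' hy'
    _ ≤ _ := by
        rw [← mul_sum]
        exact le_csSup hbdd ⟨mkZ x' y', ⟨hx', hy'⟩, rfl⟩

/-- For a differentiable convex–concave `f` on `Z = X × Y` (`X`, `Y`
nonempty compact convex) and any points `w_0, …, w_N ∈ Z`, the average
`z̄ = (1/(N+1)) ∑ w_k` satisfies
`ε_sad(z̄) ≤ max_{u ∈ Z} (1/(N+1)) ∑_k ⟨F(w_k), w_k − u⟩`. -/
theorem epsSad_le_sup_avg_inner {nx ny : ℕ} (hnx : 1 ≤ nx) (hny : 1 ≤ ny)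
    (X : Set (Esp nx)) (Y : Set (Esp ny))
    (hXne : X.Nonempty) (hYne : Y.Nonempty)
    (hXcp : IsCompact X) (hYcp : IsCompact Y) (hX : Convex ℝ X) (hY : Convex ℝ Y)
    (f : Zsp nx ny → ℝ) (hf : Differentiable ℝ f)
    (hconv : ∀ y ∈ Y, ConvexOn ℝ X (fun x => f (mkZ x y)))
    (hconc : ∀ x ∈ X, ConcaveOn ℝ Y (fun y => f (mkZ x y)))
    (N : ℕ) (w : ℕ → Zsp nx ny)
    (hw : ∀ k ≤ N, (w k).fst ∈ X ∧ (w k).snd ∈ Y) :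
    epsSad f X Y ((N + 1 : ℝ)⁻¹ • ∑ k ∈ range (N + 1), w k) ≤
      sSup ((fun u => (N + 1 : ℝ)⁻¹ * ∑ k ∈ range (N + 1), ⟪sadOp f (w k), w k - u⟫) ''
        {z : Zsp nx ny | z.fst ∈ X ∧ z.snd ∈ Y}) :=
  epsSad_le_sup_avg_inner_general X Y hXne hYne hXcp hYcp f hf hconv hconc N w hw
end
end
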